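/- arXiv:2207.12288 — 3 statements merged into one kernel-verified Lean document; each statement's English description precedes it below -/
import Mathlib

section
/- Let X be an inner product space and let {(x_{l,k})_{k∈ℕ} : l ∈ ℕ} be a countable collection of sequences in X with ‖x_{l,k}‖ ≤ 1 for all l, k, such that for each l the weak limit x_l := lim_{k→∞} x_{l,k} exists. Then every sequence N_k → ∞ of natural numbers has a subsequence (N'_k) such that for every further subsequence (N''_k) of (N'_k) and every l, the Cesàro averages (1/K) ∑_{k=1}^K x_{l,N''_k} converge to x_l in norm as K → ∞. -/
open Filter Finset Topology
open scoped InnerProductSpace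

/-!
Pass to the weakly null sequences `w l n = x l (N n) - xlim l`. Choosing `φ` greedily, with each
new term almost orthogonal to all earlier ones, gives `‖⟪w l (φ b), w l (φ a)⟫‖ ≤ 1 / (b + 1)`
whenever `a < b` and `l ≤ b`, and this persists along every further subsequence. For a bounded
sequence with this property the expansion `‖S + v‖² = ‖S‖² + 2 Re ⟪S, v⟫ + ‖v‖²` shows that its
partial sums satisfy `‖S_K‖² = O(K)`, hence `S_K / K → 0`.
-/

section Cesaro

variable {E : Type*} [NormedAddCommGroup E] [NormedSpace ℝ E]

theorem tendsto_inv_smul_zero_of_norm_sq_le {S : ℕ → E} {a b : ℝ}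
    (h : ∀ᶠ K in atTop, ‖S K‖ ^ 2 ≤ a + b * K) :
    Tendsto (fun K : ℕ => (K : ℝ)⁻¹ • S K) atTop (𝓝 0) := by
  have hbound : ∀ᶠ K : ℕ in atTop, ‖(K : ℝ)⁻¹ • S K‖ ^ 2 ≤ a / (K : ℝ) ^ 2 + b / K := by
    filter_upwards [h, eventually_gt_atTop 0] with K hS hpos
    have hK : (0 : ℝ) < K := by exact_mod_cast hpos
    rw [norm_smul, norm_inv, Real.norm_natCast, mul_pow, inv_pow, inv_mul_le_iff₀ (by positivity)]
    calc ‖S K‖ ^ 2 ≤ a + b * K := hS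
      _ = _ := by field_simp
  have hlim : Tendsto (fun K : ℕ => a / (K : ℝ) ^ 2 + b / K) atTop (𝓝 0) := by
    simpa using (tendsto_const_nhds.div_atTop
      ((tendsto_pow_atTop two_ne_zero).comp tendsto_natCast_atTop_atTop)).add
      (tendsto_const_div_atTop_nhds_zero_nat b)
  have hsq := squeeze_zero' (Eventually.of_forall fun K => by positivity) hbound hlim
  rw [tendsto_zero_iff_norm_tendsto_zero]
  simpa [Real.sqrt_sq (norm_nonneg _)] using hsq.sqrt

theorem tendsto_inv_smul_sum_Icc_of_tendsto_sub {f : ℕ → E} {c : E}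
    (h : Tendsto (fun K : ℕ => (K : ℝ)⁻¹ • ∑ k ∈ range K, (f (k + 1) - c)) atTop (𝓝 0)) :
    Tendsto (fun K : ℕ => (K : ℝ)⁻¹ • ∑ k ∈ Icc 1 K, f k) atTop (𝓝 c) := by
  have hc : Tendsto (fun K : ℕ => (K : ℝ)⁻¹ • ∑ k ∈ range K, (f (k + 1) - c) + c) atTop
      (𝓝 c) := by simpa using h.add_const c
  refine hc.congr' ?_
  filter_upwards [eventually_gt_atTop 0] with K hK
  have hK : (K : ℝ) ≠ 0 := by positivity
  rw [sum_sub_distrib, sum_const, card_range, smul_sub, ← Nat.cast_smul_eq_nsmul ℝ, smul_smul,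
    inv_mul_cancel₀ hK, one_smul, sub_add_cancel, ← Ico_add_one_right_eq_Icc,
    sum_Ico_eq_sum_range, add_tsub_cancel_right]
  simp only [add_comm 1]

end Cesaro

section AlmostOrthogonal

variable {𝕜 E : Type*} [RCLike 𝕜] [NormedAddCommGroup E] [InnerProductSpace 𝕜 E]

theorem norm_sq_sum_range_le {v : ℕ → E} {C B : ℝ} {L : ℕ} (hv : ∀ k, ‖v k‖ ≤ C)
    (hB : ∀ k, L ≤ k → ∑ j ∈ range k, ‖⟪v k, v j⟫_𝕜‖ ≤ B) :
    ∀ K, L ≤ K → ‖∑ k ∈ range K, v k‖ ^ 2 ≤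
      ‖∑ k ∈ range L, v k‖ ^ 2 + (2 * B + C ^ 2) * ((K : ℝ) - L) := by
  intro K hK
  induction K, hK using Nat.le_induction with
  | base => simp
  | succ K hLK ih =>
    have hcross : RCLike.re ⟪∑ j ∈ range K, v j, v K⟫_𝕜 ≤ B :=
      calc RCLike.re ⟪∑ j ∈ range K, v j, v K⟫_𝕜 ≤ ‖⟪v K, ∑ j ∈ range K, v j⟫_𝕜‖ := by
            rw [norm_inner_symm]; exact RCLike.re_le_norm _
        _ ≤ ∑ j ∈ range K, ‖⟪v K, v j⟫_𝕜‖ := by rw [inner_sum]; exact norm_sum_le _ _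
        _ ≤ B := hB K hLK
    have hlast : ‖v K‖ ^ 2 ≤ C ^ 2 := pow_le_pow_left₀ (norm_nonneg _) (hv K) 2
    rw [sum_range_succ, norm_add_sq (𝕜 := 𝕜)]
    push_cast
    linarith

theorem tendsto_inv_smul_sum_range_zero_of_sum_norm_inner_le [NormedSpace ℝ E] {v : ℕ → E}
    {C B : ℝ} {L : ℕ} (hv : ∀ k, ‖v k‖ ≤ C)
    (hB : ∀ k, L ≤ k → ∑ j ∈ range k, ‖⟪v k, v j⟫_𝕜‖ ≤ B) :
    Tendsto (fun K : ℕ => (K : ℝ)⁻¹ • ∑ k ∈ range K, v k) atTop (𝓝 0) := by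
  refine tendsto_inv_smul_zero_of_norm_sq_le
    (a := ‖∑ k ∈ range L, v k‖ ^ 2 - (2 * B + C ^ 2) * L) (b := 2 * B + C ^ 2) ?_
  filter_upwards [eventually_ge_atTop L] with K hK
  linarith [norm_sq_sum_range_le hv hB K hK]

theorem exists_strictMono_norm_inner_le {w : ℕ → ℕ → E}
    (hw : ∀ l y, Tendsto (fun n => ⟪w l n, y⟫_𝕜) atTop (𝓝 0)) :
    ∃ φ : ℕ → ℕ, StrictMono φ ∧
      ∀ l a b, a < b → l ≤ b → ‖⟪w l (φ b), w l (φ a)⟫_𝕜‖ ≤ ((b : ℝ) + 1)⁻¹ := by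
  have hnext : ∀ p k : ℕ, ∃ n, p < n ∧
      ∀ l ≤ k, ∀ j ≤ p, ‖⟪w l n, w l j⟫_𝕜‖ ≤ ((k : ℝ) + 1)⁻¹ := by
    intro p k
    have hsmall : ∀ l j, ∀ᶠ n in atTop, ‖⟪w l n, w l j⟫_𝕜‖ ≤ ((k : ℝ) + 1)⁻¹ := fun l j =>
      (hw l (w l j)).norm.eventually_le_const (by rw [norm_zero]; positivity)
    exact ((eventually_gt_atTop p).and <|
      (Set.finite_le_nat k).eventually_all.2 fun l _ =>
        (Set.finite_le_nat p).eventually_all.2 fun j _ => hsmall l j).exists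
  choose f hf_gt hf using hnext
  let φ : ℕ → ℕ := fun k => Nat.rec 0 (fun k φk => f φk (k + 1)) k
  have hφ : StrictMono φ := strictMono_nat_of_lt_succ fun k => hf_gt (φ k) (k + 1)
  refine ⟨φ, hφ, fun l a b hab hlb => ?_⟩
  obtain ⟨m, rfl⟩ : ∃ m, b = m + 1 := ⟨b - 1, by omega⟩
  exact_mod_cast hf (φ m) (m + 1) l hlb (φ a) (hφ.monotone (by omega))

end AlmostOrthogonal

theorem stmt2 {E : Type*} [NormedAddCommGroup E] [InnerProductSpace ℂ E]
    (x : ℕ → ℕ → E) (hbd : ∀ l k, ‖x l k‖ ≤ 1) (xlim : ℕ → E)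
    (hweak : ∀ l (y : E),
      Tendsto (fun k => (inner ℂ (x l k) y : ℂ)) atTop (𝓝 (inner ℂ (xlim l) y)))
    (N : ℕ → ℕ) (hN : Tendsto N atTop atTop) :
    ∃ φ : ℕ → ℕ, StrictMono φ ∧
      ∀ ψ : ℕ → ℕ, StrictMono ψ → ∀ l,
        Tendsto (fun K : ℕ => (K : ℝ)⁻¹ • ∑ k ∈ Finset.Icc 1 K, x l (N (φ (ψ k))))
          atTop (𝓝 (xlim l)) := by
  let w : ℕ → ℕ → E := fun l n => x l (N n) - xlim l
  have hw : ∀ l y, Tendsto (fun n => ⟪w l n, y⟫_ℂ) atTop (𝓝 0) := fun l y => by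
    simpa [w, inner_sub_left] using ((hweak l y).comp hN).sub_const ⟪xlim l, y⟫_ℂ
  obtain ⟨φ, hφ, hφw⟩ := exists_strictMono_norm_inner_le hw
  refine ⟨φ, hφ, fun ψ hψ l => tendsto_inv_smul_sum_Icc_of_tendsto_sub ?_⟩
  refine tendsto_inv_smul_sum_range_zero_of_sum_norm_inner_le (𝕜 := ℂ)
    (v := fun k => w l (φ (ψ (k + 1)))) (C := 1 + ‖xlim l‖) (B := 1) (L := l)
    (fun k => (norm_sub_le _ _).trans (by gcongr; exact hbd _ _)) (fun k hk => ?_)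
  have hψk : k ≤ ψ (k + 1) := k.le_succ.trans hψ.le_apply
  calc ∑ j ∈ range k, ‖⟪w l (φ (ψ (k + 1))), w l (φ (ψ (j + 1)))⟫_ℂ‖
      ≤ ∑ j ∈ range k, ((k : ℝ) + 1)⁻¹ := sum_le_sum fun j hj => by
        refine (hφw l _ _ (hψ (Nat.succ_lt_succ (mem_range.1 hj)))
          (hk.trans hψk)).trans ?_
        gcongr
    _ ≤ 1 := by
        rw [sum_const, card_range, nsmul_eq_mul, ← div_eq_mul_inv, div_le_one (by positivity)]
        linarith
end

section
/- Let X be an inner product space and (x_k) a sequence in X with ‖x_k‖ ≤ 1 for all k and weak limit 0. Then there exists a subsequence (x_{k_n}) such that ‖(1/K)∑_{n=1}^K x_{k_n}‖² ≤ 3/K for every K ∈ ℕ. -/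
/-!
Pass to a subsequence that is almost orthogonal: since `⟪x_k, y⟫ → 0` for each fixed `y`, one can
choose `k_n` inductively so that `|⟪x_{k_n}, x_{k_m}⟫| ≤ 2⁻ᵐ` for all `m < n`. Expanding
`‖∑_{n ≤ K} x_{k_n}‖²` into inner products, the `K` diagonal terms are at most `1` and the
off-diagonal terms sum to at most `2K ∑_{m ≤ K} 2⁻ᵐ ≤ 2K`, so the square norm of the sum is at
most `3K`.
-/

open Filter Finset Topology
open scoped InnerProductSpace

section InnerProductSpace

variable {𝕜 E : Type*} [RCLike 𝕜] [NormedAddCommGroup E] [InnerProductSpace 𝕜 E]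

theorem exists_strictMono_norm_inner_le_s3 {x : ℕ → E}
    (hweak : ∀ y : E, Tendsto (fun k => ⟪x k, y⟫_𝕜) atTop (𝓝 0))
    {ε : ℕ → ℝ} (hε : ∀ n, 0 < ε n) (hε_anti : Antitone ε) :
    ∃ k : ℕ → ℕ, StrictMono k ∧ ∀ m n, m < n → ‖⟪x (k n), x (k m)⟫_𝕜‖ ≤ ε m := by
  obtain ⟨k, -, hk⟩ := exists_seq_of_forall_finset_exists (fun _ : ℕ => True)
    (fun a b => a < b ∧ ‖⟪x b, x a⟫_𝕜‖ ≤ ε a) fun s _ => by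
      have hsmall : ∀ a, ∀ᶠ b in atTop, ‖⟪x b, x a⟫_𝕜‖ < ε a := fun a =>
        (hweak (x a)).norm.eventually_lt_const (by simpa using hε a)
      have hgood : ∀ᶠ b in atTop, ∀ a ∈ s, a < b ∧ ‖⟪x b, x a⟫_𝕜‖ ≤ ε a :=
        (eventually_all_finset s).2 fun a _ =>
          (eventually_gt_atTop a).and ((hsmall a).mono fun _ h => h.le)
      obtain ⟨b, hb⟩ := hgood.exists
      exact ⟨b, trivial, hb⟩
  have hmono : StrictMono k := fun m n h => (hk m n h).1
  exact ⟨k, hmono, fun m n h => (hk m n h).2.trans (hε_anti hmono.le_apply)⟩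

theorem norm_sum_sq_le_sum_sum_norm_inner {ι : Type*} (s : Finset ι) (v : ι → E) :
    ‖∑ i ∈ s, v i‖ ^ 2 ≤ ∑ i ∈ s, ∑ j ∈ s, ‖⟪v i, v j⟫_𝕜‖ := by
  rw [← inner_self_eq_norm_sq (𝕜 := 𝕜), sum_inner, map_sum]
  refine sum_le_sum fun i _ => ?_
  rw [inner_sum, map_sum]
  exact sum_le_sum fun j _ => RCLike.re_le_norm _

theorem norm_sum_sq_le_of_norm_inner_le {v : ℕ → E} (hv : ∀ i, ‖v i‖ ≤ 1)
    {ε : ℕ → ℝ} (hε : ∀ n, 0 ≤ ε n) (hinner : ∀ m n, m < n → ‖⟪v n, v m⟫_𝕜‖ ≤ ε m)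
    (s : Finset ℕ) :
    ‖∑ i ∈ s, v i‖ ^ 2 ≤ #s + 2 * #s * ∑ i ∈ s, ε i := by
  have hterm : ∀ i j, ‖⟪v i, v j⟫_𝕜‖ ≤ (if i = j then 1 else 0) + ε i + ε j := by
    intro i j
    have hεi := hε i
    have hεj := hε j
    rcases lt_trichotomy i j with hij | rfl | hij
    · have := norm_inner_symm (𝕜 := 𝕜) (v i) (v j) ▸ hinner i j hij
      simp only [hij.ne, if_false]
      linarith
    · have hii : ‖⟪v i, v i⟫_𝕜‖ ≤ 1 :=
        (norm_inner_le_norm _ _).trans (mul_le_one₀ (hv i) (norm_nonneg _) (hv i))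
      simp only [if_true]
      linarith
    · have := hinner j i hij
      simp only [hij.ne', if_false]
      linarith
  calc ‖∑ i ∈ s, v i‖ ^ 2 ≤ ∑ i ∈ s, ∑ j ∈ s, ‖⟪v i, v j⟫_𝕜‖ :=
        norm_sum_sq_le_sum_sum_norm_inner s v
    _ ≤ ∑ i ∈ s, ∑ j ∈ s, ((if i = j then 1 else 0) + ε i + ε j) :=
        sum_le_sum fun i _ => sum_le_sum fun j _ => hterm i j
    _ = #s + 2 * #s * ∑ i ∈ s, ε i := by
        simp only [sum_add_distrib, sum_ite_eq, sum_const, nsmul_eq_mul, ← mul_sum, sum_ite_mem,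
          inter_self, mul_one]
        ring

end InnerProductSpace

theorem sum_Icc_one_half_pow_le_one (K : ℕ) : ∑ i ∈ Icc 1 K, (1 / 2 : ℝ) ^ i ≤ 1 := by
  rw [← Ico_add_one_right_eq_Icc, sum_Ico_eq_sum_range, add_tsub_cancel_right]
  simp only [add_comm 1, pow_succ, ← sum_mul]
  linarith [sum_geometric_two_le K]

theorem stmt3 {E : Type*} [NormedAddCommGroup E] [InnerProductSpace ℂ E]
    (x : ℕ → E) (hbd : ∀ k, ‖x k‖ ≤ 1)
    (hweak : ∀ y : E, Tendsto (fun k => (inner ℂ (x k) y : ℂ)) atTop (𝓝 0)) :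
    ∃ k : ℕ → ℕ, StrictMono k ∧
      ∀ K : ℕ, 1 ≤ K →
        ‖(K : ℝ)⁻¹ • ∑ n ∈ Finset.Icc 1 K, x (k n)‖ ^ 2 ≤ 3 / (K : ℝ) := by
  obtain ⟨k, hk_mono, hk_inner⟩ := exists_strictMono_norm_inner_le_s3 hweak
    (ε := fun m => (1 / 2 : ℝ) ^ m) (fun _ => by positivity)
    fun _ _ h => pow_le_pow_of_le_one (by norm_num) (by norm_num) h
  refine ⟨k, hk_mono, fun K hK => ?_⟩
  have hK : (0 : ℝ) < K := by exact_mod_cast hK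
  have hsum : ‖∑ n ∈ Icc 1 K, x (k n)‖ ^ 2 ≤ 3 * K := by
    have h := norm_sum_sq_le_of_norm_inner_le (fun n => hbd (k n)) (fun _ => by positivity)
      hk_inner (Icc 1 K)
    rw [Nat.card_Icc, add_tsub_cancel_right] at h
    calc _ ≤ K + 2 * K * ∑ i ∈ Icc 1 K, (1 / 2 : ℝ) ^ i := h
      _ ≤ K + 2 * K * 1 := by gcongr; exact sum_Icc_one_half_pow_le_one K
      _ = 3 * K := by ring
  calc ‖(K : ℝ)⁻¹ • ∑ n ∈ Icc 1 K, x (k n)‖ ^ 2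
      = (K : ℝ)⁻¹ ^ 2 * ‖∑ n ∈ Icc 1 K, x (k n)‖ ^ 2 := by
        rw [norm_smul, mul_pow, Real.norm_of_nonneg (by positivity)]
    _ ≤ (K : ℝ)⁻¹ ^ 2 * (3 * K) := by gcongr
    _ = 3 / K := by field_simp
end

section
/- Let (X, 𝒳, μ, T) be a measure-preserving system on a probability space and let χ ∈ L^∞(μ) be a nonergodic eigenfunction of T with eigenvalue λ (i.e. |χ| ∈ {0,1} a.e., λ is T-invariant, λ = 0 where χ = 0, and χ∘T = λ·χ a.e.). Define χ_ℚ := χ·1_{E_ℚ} where E_ℚ = {x : λ(x) = e(q) for some q ∈ ℚ}, and χ_{ℝ∖ℚ} := χ − χ_ℚ. Then χ_ℚ equals the conditional expectation of χ onto the rational Kronecker factor 𝒦_rat(T), and χ_{ℝ∖ℚ} = χ − E(χ|𝒦_rat(T)); in particular both E(χ|𝒦_rat(T)) and χ − E(χ|𝒦_rat(T)) are again nonergodic eigenfunctions of T. -/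
/-!
On the `T`-invariant set `E = {λ ∈ e(ℚ)}`, `χ 1_E` is the `L²`-limit of finite sums of the
pieces `χ 1_{λ = e(q)}`, each an eigenfunction with the rational eigenvalue `e(q)`.
Off `E`, `χ` is orthogonal to every rational eigenfunction `g` with eigenvalue `e(q)`: the
integrable function `h = χ 1_{Eᶜ} ḡ` satisfies `h ∘ T = w h` with invariant `w = λ e(-q)`, and
`w ≠ 1` wherever `h ≠ 0`; integrating `φ (1 - w) h` against bounded invariant `φ ≈ (1 - w)⁻¹`
gives `∫ h = 0`. Since `λ` is invariant, restricting `χ` to any set `{λ ∈ B}` again gives a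
nonergodic eigenfunction.
-/

open MeasureTheory Filter

noncomputable section

/-- `e2pi r = e(r) = exp(2πir)`. -/
def e2pi (r : ℝ) : ℂ := Complex.exp (2 * (Real.pi : ℂ) * Complex.I * (r : ℂ))

variable {X : Type*} [MeasurableSpace X]

/-- `χ` is a nonergodic eigenfunction of `T` with eigenvalue `lam`. -/
def IsNonergodicEigenfunction (μ : Measure X) (T : X → X) (χ lam : X → ℂ) : Prop :=
  (∀ᵐ x ∂μ, χ x = 0 ∨ ‖χ x‖ = 1) ∧
  (∀ᵐ x ∂μ, lam (T x) = lam x) ∧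
  (∀ᵐ x ∂μ, χ x = 0 → lam x = 0) ∧
  (∀ᵐ x ∂μ, χ (T x) = lam x * χ x)

/-- The rational eigenfunctions of `T` lying in `L²(μ)`. -/
def RatEig (μ : Measure X) (T : X → X) : Set (X → ℂ) :=
  {g | MemLp g 2 μ ∧ ∃ q : ℚ, ∀ᵐ x ∂μ, g (T x) = e2pi (q : ℝ) * g x}

/-- `f` belongs to the rational Kronecker factor `𝒦_rat(T)`, i.e. `f` is an
`L²(μ)`-limit of linear combinations of rational eigenfunctions of `T`. -/
def InKrat (μ : Measure X) (T : X → X) (f : X → ℂ) : Prop :=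
  ∀ ε : ℝ, 0 < ε → ∃ g ∈ Submodule.span ℂ (RatEig μ T),
    eLpNorm (fun x => f x - g x) 2 μ < ENNReal.ofReal ε

open Topology ENNReal ComplexConjugate

lemma MeasureTheory.MemLp.indicator₀ {μ : Measure X} {p : ℝ≥0∞} {E : Type*}
    [NormedAddCommGroup E] {f : X → E} {s : Set X} (hf : MemLp f p μ) (hs : NullMeasurableSet s μ) :
    MemLp (s.indicator f) p μ :=
  hf.mono (hf.1.indicator₀ hs) (ae_of_all _ fun x => norm_indicator_le_norm_self f x)

lemma tendsto_eLpNorm_indicator_of_antitone {μ : Measure X} [IsFiniteMeasure μ] {ι : Type*}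
    [Preorder ι] [Nonempty ι] [IsCountablyGenerated (atTop : Filter ι)] {A : ι → Set X}
    (hA : ∀ i, NullMeasurableSet (A i) μ) (hAanti : Antitone A) (hA0 : ⋂ i, A i = ∅)
    {p : ℝ≥0∞} (hp0 : p ≠ 0) (hp : p ≠ ∞) {f : X → ℂ} (hf : ∀ᵐ x ∂μ, ‖f x‖ ≤ 1) :
    Tendsto (fun i => eLpNorm ((A i).indicator f) p μ) atTop (𝓝 0) := by
  have hμA : Tendsto (fun i => μ (A i)) atTop (𝓝 0) := by
    have := tendsto_measure_iInter_atTop hA hAanti ⟨Classical.arbitrary _, measure_ne_top μ _⟩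
    rwa [hA0, measure_empty] at this
  have hexp : 0 < 1 / p.toReal := one_div_pos.2 (ENNReal.toReal_pos hp0 hp)
  have hbound : Tendsto (fun i => μ (A i) ^ (1 / p.toReal)) atTop (𝓝 0) := by
    have := (ENNReal.continuous_rpow_const (y := 1 / p.toReal)).tendsto 0 |>.comp hμA
    rwa [ENNReal.zero_rpow_of_pos hexp] at this
  refine tendsto_of_tendsto_of_tendsto_of_le_of_le tendsto_const_nhds hbound (fun _ => zero_le)
    fun i => ?_
  calc eLpNorm ((A i).indicator f) p μ ≤ eLpNorm ((A i).indicator fun _ => (1 : ℂ)) p μ := by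
        refine eLpNorm_mono_ae ?_
        filter_upwards [hf] with x hx
        by_cases hxA : x ∈ A i <;> simp [hxA, hx]
    _ ≤ μ (A i) ^ (1 / p.toReal) := by
        simpa using eLpNorm_indicator_const_le (1 : ℂ) p (s := A i) (μ := μ)

lemma integral_mul_conj_eq_zero_of_mem_span {μ : Measure X} {f : X → ℂ} (hf : MemLp f 2 μ)
    {S : Set (X → ℂ)} (hS : ∀ g ∈ S, MemLp g 2 μ ∧ ∫ x, f x * conj (g x) ∂μ = 0)
    {g : X → ℂ} (hg : g ∈ Submodule.span ℂ S) : ∫ x, f x * conj (g x) ∂μ = 0 := by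
  have hint {g : X → ℂ} (hg : MemLp g 2 μ) : Integrable (fun x => f x * conj (g x)) μ :=
    hf.integrable_mul hg.star
  refine (Submodule.span_induction (p := fun g _ => MemLp g 2 μ ∧ ∫ x, f x * conj (g x) ∂μ = 0)
    hS ⟨MemLp.zero, by simp⟩ ?_ ?_ hg).2
  · rintro a b - - ⟨ha, ha0⟩ ⟨hb, hb0⟩
    refine ⟨ha.add hb, ?_⟩
    simp only [Pi.add_apply, map_add, mul_add]
    rw [integral_add (hint ha) (hint hb), ha0, hb0, add_zero]
  · rintro c a - ⟨ha, ha0⟩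
    refine ⟨ha.const_smul c, ?_⟩
    simp only [Pi.smul_apply, smul_eq_mul, map_mul, mul_left_comm (f _)]
    rw [integral_const_mul, ha0, mul_zero]

def regInv (ε : ℝ) (z : ℂ) : ℂ := conj z / ((‖z‖ ^ 2 + ε : ℝ) : ℂ)

lemma regInv_mul_self (ε : ℝ) (z : ℂ) : regInv ε z * z = ((‖z‖ ^ 2 / (‖z‖ ^ 2 + ε) : ℝ) : ℂ) := by
  rw [regInv, div_mul_eq_mul_div, Complex.conj_mul']
  push_cast; rfl

lemma continuous_regInv {ε : ℝ} (hε : 0 < ε) : Continuous (regInv ε) := by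
  refine Complex.continuous_conj.div (by fun_prop) fun z => ?_
  exact_mod_cast (by positivity : ‖z‖ ^ 2 + ε ≠ 0)

lemma norm_regInv_le {ε : ℝ} (hε : 0 < ε) (z : ℂ) : ‖regInv ε z‖ ≤ 1 + ε⁻¹ := by
  have hden : 0 < ‖z‖ ^ 2 + ε := by positivity
  rw [regInv, norm_div, Complex.norm_conj, Complex.norm_real, Real.norm_of_nonneg hden.le,
    div_le_iff₀ hden]
  calc ‖z‖ ≤ ‖z‖ ^ 2 + 1 := by nlinarith [sq_nonneg (‖z‖ - 1)]
    _ ≤ (1 + ε⁻¹) * (‖z‖ ^ 2 + ε) := by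
      rw [add_mul, one_mul, inv_mul_eq_div, add_div, div_self hε.ne']
      nlinarith [div_nonneg (sq_nonneg ‖z‖) hε.le]

lemma norm_regInv_mul_self_le {ε : ℝ} (hε : 0 < ε) (z : ℂ) : ‖regInv ε z * z‖ ≤ 1 := by
  rw [regInv_mul_self, Complex.norm_real, Real.norm_of_nonneg (by positivity)]
  exact div_le_one_of_le₀ (by linarith) (by positivity)

lemma tendsto_regInv_mul_self {z : ℂ} (hz : z ≠ 0) :
    Tendsto (fun n : ℕ => regInv (1 / (n + 1)) z * z) atTop (𝓝 1) := by
  simp_rw [regInv_mul_self]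
  refine (Complex.continuous_ofReal.tendsto 1).comp ?_
  have hz2 : ‖z‖ ^ 2 ≠ 0 := by positivity
  have := (tendsto_const_nhds (x := ‖z‖ ^ 2)).div
    (tendsto_const_nhds.add tendsto_one_div_add_atTop_nhds_zero_nat) (by rwa [add_zero])
  rwa [add_zero, div_self hz2] at this

section Invariance

variable {μ : Measure X} {T : X → X}

lemma MeasureTheory.MeasurePreserving.integral_comp_of_aestronglyMeasurable
    (hT : MeasurePreserving T μ μ) {f : X → ℂ} (hf : AEStronglyMeasurable f μ) :
    ∫ x, f (T x) ∂μ = ∫ x, f x ∂μ := by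
  have hf' : AEStronglyMeasurable f (μ.map T) := hT.map_eq.symm ▸ hf
  rw [← integral_map hT.measurable.aemeasurable hf', hT.map_eq]

/-- `∫ φ h` and `∫ φ w h = ∫ (φ h) ∘ T` agree by invariance of `μ`. -/
lemma integral_mul_one_sub_mul_eq_zero (hT : MeasurePreserving T μ μ) {h w φ : X → ℂ} {C : ℝ}
    (hh : Integrable h μ) (hφ : AEStronglyMeasurable φ μ) (hφC : ∀ᵐ x ∂μ, ‖φ x‖ ≤ C)
    (hφT : ∀ᵐ x ∂μ, φ (T x) = φ x) (hhT : ∀ᵐ x ∂μ, h (T x) = w x * h x) :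
    ∫ x, φ x * (1 - w x) * h x ∂μ = 0 := by
  have hφh : Integrable (fun x => φ x * h x) μ := hh.bdd_mul hφ hφC
  have hcomp : (fun x => φ (T x) * h (T x)) =ᵐ[μ] fun x => φ x * (w x * h x) := by
    filter_upwards [hφT, hhT] with x h₁ h₂
    rw [h₁, h₂]
  have hφh' : Integrable (fun x => φ x * h x) (μ.map T) := hT.map_eq.symm ▸ hφh
  have hφwh : Integrable (fun x => φ x * (w x * h x)) μ :=
    (hφh'.comp_measurable hT.measurable).congr hcomp
  calc ∫ x, φ x * (1 - w x) * h x ∂μ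
      = ∫ x, φ x * h x ∂μ - ∫ x, φ x * (w x * h x) ∂μ := by
        rw [← integral_sub hφh hφwh]; congr 1 with x; ring
    _ = 0 := by
        rw [← integral_congr_ae hcomp, hT.integral_comp_of_aestronglyMeasurable hφh.1, sub_self]

/-- Apply `integral_mul_one_sub_mul_eq_zero` to `φ = regInv ε (1 - w)`, a bounded invariant
approximation of `(1 - w)⁻¹`, and let `ε → 0`. -/
theorem integral_eq_zero_of_comp_eq_mul (hT : MeasurePreserving T μ μ) {h w : X → ℂ}
    (hh : Integrable h μ) (hw : AEStronglyMeasurable w μ) (hwT : ∀ᵐ x ∂μ, w (T x) = w x)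
    (hhT : ∀ᵐ x ∂μ, h (T x) = w x * h x) (hw1 : ∀ᵐ x ∂μ, w x = 1 → h x = 0) :
    ∫ x, h x ∂μ = 0 := by
  let φ : ℕ → X → ℂ := fun n x => regInv (1 / (n + 1)) (1 - w x)
  have hε (n : ℕ) : (0 : ℝ) < 1 / (n + 1) := by positivity
  have hφ (n : ℕ) : AEStronglyMeasurable (φ n) μ :=
    (continuous_regInv (hε n)).comp_aestronglyMeasurable (aestronglyMeasurable_const.sub hw)
  have hzero (n : ℕ) : ∫ x, φ n x * (1 - w x) * h x ∂μ = 0 := by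
    refine integral_mul_one_sub_mul_eq_zero hT hh (hφ n)
      (ae_of_all _ fun x => norm_regInv_le (hε n) _) ?_ hhT
    filter_upwards [hwT] with x hx
    simp only [φ, hx]
  have hlim : Tendsto (fun n => ∫ x, φ n x * (1 - w x) * h x ∂μ) atTop (𝓝 (∫ x, h x ∂μ)) := by
    refine tendsto_integral_of_dominated_convergence (fun x => ‖h x‖)
      (fun n => ((hφ n).mul (aestronglyMeasurable_const.sub hw)).mul hh.1) hh.norm
      (fun n => ae_of_all _ fun x => ?_) ?_
    · rw [norm_mul]
      exact mul_le_of_le_one_left (norm_nonneg _) (norm_regInv_mul_self_le (hε n) _)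
    · filter_upwards [hw1] with x hx
      by_cases hwx : w x = 1
      · simp [hx hwx]
      · have := (tendsto_regInv_mul_self (sub_ne_zero.2 (Ne.symm hwx))).mul_const (h x)
        rwa [one_mul] at this
  simp only [hzero] at hlim
  exact (tendsto_nhds_unique tendsto_const_nhds hlim).symm

end Invariance

def e2piRat : Set ℂ := {z | ∃ q : ℚ, z = e2pi (q : ℝ)}

lemma norm_e2pi (r : ℝ) : ‖e2pi r‖ = 1 := by
  rw [e2pi, Complex.norm_exp]
  simp [Complex.mul_re]

lemma eq_e2pi_of_mul_conj_eq_one {z : ℂ} {r : ℝ} (h : z * conj (e2pi r) = 1) : z = e2pi r := by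
  calc z = z * conj (e2pi r) * e2pi r := by
          rw [mul_assoc, Complex.conj_mul', norm_e2pi]; simp
    _ = e2pi r := by rw [h, one_mul]

lemma measurableSet_e2piRat : MeasurableSet e2piRat :=
  ((Set.countable_range fun q : ℚ => e2pi (q : ℝ)).mono <| by
    rintro _ ⟨q, rfl⟩; exact ⟨q, rfl⟩).measurableSet

section Eigenfunction

variable {μ : Measure X} {T : X → X} {χ lam : X → ℂ}

lemma indicator_preimage_comp_ae (hlamT : ∀ᵐ x ∂μ, lam (T x) = lam x)
    (hχT : ∀ᵐ x ∂μ, χ (T x) = lam x * χ x) (B : Set ℂ) :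
    ∀ᵐ x ∂μ, (lam ⁻¹' B).indicator χ (T x) = lam x * (lam ⁻¹' B).indicator χ x := by
  filter_upwards [hlamT, hχT] with x hx hχx
  by_cases hB : lam x ∈ B <;> simp [hx, hχx, hB]

namespace IsNonergodicEigenfunction

lemma norm_le_one (h : IsNonergodicEigenfunction μ T χ lam) : ∀ᵐ x ∂μ, ‖χ x‖ ≤ 1 := by
  filter_upwards [h.1] with x hx
  rcases hx with hx | hx <;> simp [hx]

lemma indicator_preimage (h : IsNonergodicEigenfunction μ T χ lam) (B : Set ℂ) :
    IsNonergodicEigenfunction μ T ((lam ⁻¹' B).indicator χ) ((lam ⁻¹' B).indicator lam) := by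
  obtain ⟨h01, hlamT, hχ0, hχT⟩ := h
  refine ⟨?_, ?_, ?_, ?_⟩
  · filter_upwards [h01] with x hx
    by_cases hxB : x ∈ lam ⁻¹' B <;> simp [hxB, hx]
  · filter_upwards [hlamT] with x hx
    by_cases hB : lam x ∈ B <;> simp [hx, hB]
  · filter_upwards [hχ0] with x hx
    by_cases hxB : x ∈ lam ⁻¹' B
    · simpa [hxB] using hx
    · simp [hxB]
  · filter_upwards [indicator_preimage_comp_ae hlamT hχT B] with x hx
    by_cases hxB : x ∈ lam ⁻¹' B <;> simp_all

end IsNonergodicEigenfunction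

lemma indicator_preimage_singleton_mem_ratEig (hχ : MemLp χ 2 μ) (hlam : AEMeasurable lam μ)
    (hlamT : ∀ᵐ x ∂μ, lam (T x) = lam x) (hχT : ∀ᵐ x ∂μ, χ (T x) = lam x * χ x) (q : ℚ) :
    (lam ⁻¹' {e2pi q}).indicator χ ∈ RatEig μ T := by
  refine ⟨hχ.indicator₀ (hlam.nullMeasurable (measurableSet_singleton _)), q, ?_⟩
  filter_upwards [indicator_preimage_comp_ae hlamT hχT {e2pi q}] with x hx
  by_cases hxq : lam x = e2pi q
  · rwa [hxq] at hx
  · simp_all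

lemma indicator_preimage_mem_span_ratEig (hχ : MemLp χ 2 μ) (hlam : AEMeasurable lam μ)
    (hlamT : ∀ᵐ x ∂μ, lam (T x) = lam x) (hχT : ∀ᵐ x ∂μ, χ (T x) = lam x * χ x)
    (S : Finset ℂ) (hS : ↑S ⊆ e2piRat) :
    (lam ⁻¹' ↑S).indicator χ ∈ Submodule.span ℂ (RatEig μ T) := by
  rw [← Set.biUnion_preimage_singleton, Finset.set_biUnion_coe,
    Finset.indicator_biUnion _ _ (Set.pairwiseDisjoint_fiber lam _), ← Finset.sum_fn]
  refine Submodule.sum_mem _ fun a ha => Submodule.subset_span ?_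
  obtain ⟨q, rfl⟩ := hS ha
  exact indicator_preimage_singleton_mem_ratEig hχ hlam hlamT hχT q

end Eigenfunction

section Kronecker

variable {μ : Measure X} {T : X → X} {χ lam : X → ℂ}

theorem inKrat_indicator_preimage_e2piRat [IsFiniteMeasure μ] (hχ : AEStronglyMeasurable χ μ)
    (hχ1 : ∀ᵐ x ∂μ, ‖χ x‖ ≤ 1) (hlam : AEMeasurable lam μ)
    (hlamT : ∀ᵐ x ∂μ, lam (T x) = lam x) (hχT : ∀ᵐ x ∂μ, χ (T x) = lam x * χ x) :
    InKrat μ T ((lam ⁻¹' e2piRat).indicator χ) := by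
  let S : Finset ℚ → Finset ℂ := fun s => s.image fun q : ℚ => e2pi q
  have hS (s : Finset ℚ) : ↑(S s) ⊆ e2piRat := by
    intro z hz
    obtain ⟨q, -, rfl⟩ := Finset.mem_image.1 hz
    exact ⟨q, rfl⟩
  have hlim :
      Tendsto (fun s => eLpNorm ((lam ⁻¹' (e2piRat \ S s)).indicator χ) 2 μ) atTop (𝓝 0) := by
    refine tendsto_eLpNorm_indicator_of_antitone
      (fun s => hlam.nullMeasurable (measurableSet_e2piRat.diff (S s).measurableSet))
      (fun s t hst => Set.preimage_mono (Set.sdiff_subset_sdiff_right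
        (Finset.coe_subset.2 (Finset.image_subset_image hst))))
      ?_ two_ne_zero ofNat_ne_top hχ1
    refine Set.eq_empty_of_forall_notMem fun x hx => ?_
    obtain ⟨q, hq⟩ := (Set.mem_iInter.1 hx ∅).1
    exact (Set.mem_iInter.1 hx {q}).2 (by simp [S, hq])
  intro ε hε
  obtain ⟨s, hs⟩ := (hlim.eventually (gt_mem_nhds (ENNReal.ofReal_pos.2 hε))).exists
  refine ⟨_, indicator_preimage_mem_span_ratEig (.of_bound hχ 1 hχ1) hlam hlamT hχT _ (hS s), ?_⟩
  rw [Set.preimage_sdiff, Set.indicator_sdiff (Set.preimage_mono (hS s))] at hs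
  exact hs

theorem integral_indicator_preimage_compl_mul_conj_eq_zero (hT : MeasurePreserving T μ μ)
    (hχ : MemLp χ 2 μ) (hlam : AEStronglyMeasurable lam μ) (hlamT : ∀ᵐ x ∂μ, lam (T x) = lam x)
    (hχT : ∀ᵐ x ∂μ, χ (T x) = lam x * χ x) {g : X → ℂ}
    (hg : g ∈ Submodule.span ℂ (RatEig μ T)) :
    ∫ x, (lam ⁻¹' e2piRatᶜ).indicator χ x * conj (g x) ∂μ = 0 := by
  have hf : MemLp ((lam ⁻¹' e2piRatᶜ).indicator χ) 2 μ :=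
    hχ.indicator₀ (hlam.aemeasurable.nullMeasurable measurableSet_e2piRat.compl)
  refine integral_mul_conj_eq_zero_of_mem_span hf (fun u hu => ⟨hu.1, ?_⟩) hg
  obtain ⟨hu2, q, huT⟩ := hu
  refine integral_eq_zero_of_comp_eq_mul hT (hf.integrable_mul hu2.star)
    (w := fun x => lam x * conj (e2pi q)) (hlam.mul_const _) ?_ ?_ (ae_of_all _ fun x hw => ?_)
  · filter_upwards [hlamT] with x hx
    rw [hx]
  · filter_upwards [indicator_preimage_comp_ae hlamT hχT e2piRatᶜ, huT] with x hfx hux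
    simp only [hfx, hux, map_mul]
    ring
  · have hx : x ∉ lam ⁻¹' e2piRatᶜ := fun hx => hx ⟨q, eq_e2pi_of_mul_conj_eq_one hw⟩
    rw [Set.indicator_of_notMem hx, zero_mul]

end Kronecker

theorem stmt7 (μ : Measure X) [IsProbabilityMeasure μ] (T : X → X)
    (hT : MeasurePreserving T μ μ) (χ lam : X → ℂ)
    (hχ : MemLp χ ⊤ μ) (hlam : AEStronglyMeasurable lam μ)
    (heig : IsNonergodicEigenfunction μ T χ lam) :
    InKrat μ T (Set.indicator {x | ∃ q : ℚ, lam x = e2pi (q : ℝ)} χ) ∧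
    (∀ g ∈ Submodule.span ℂ (RatEig μ T),
      ∫ x, (χ x - Set.indicator {x | ∃ q : ℚ, lam x = e2pi (q : ℝ)} χ x) *
        (starRingEnd ℂ) (g x) ∂μ = 0) ∧
    (∃ lamQ : X → ℂ, IsNonergodicEigenfunction μ T
      (Set.indicator {x | ∃ q : ℚ, lam x = e2pi (q : ℝ)} χ) lamQ) ∧
    (∃ lam' : X → ℂ, IsNonergodicEigenfunction μ T
      (fun x => χ x - Set.indicator {x | ∃ q : ℚ, lam x = e2pi (q : ℝ)} χ x) lam') := by
  have hcompl (x : X) : χ x - Set.indicator {x | ∃ q : ℚ, lam x = e2pi (q : ℝ)} χ x =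
      (lam ⁻¹' e2piRatᶜ).indicator χ x :=
    (congrFun (Set.indicator_compl (lam ⁻¹' e2piRat) χ) x).symm
  have hlamT : ∀ᵐ x ∂μ, lam (T x) = lam x := heig.2.1
  have hχT : ∀ᵐ x ∂μ, χ (T x) = lam x * χ x := heig.2.2.2
  simp only [hcompl]
  exact ⟨inKrat_indicator_preimage_e2piRat hχ.1 heig.norm_le_one hlam.aemeasurable hlamT hχT,
    fun g hg => integral_indicator_preimage_compl_mul_conj_eq_zero hT (hχ.mono_exponent le_top)
      hlam hlamT hχT hg,
    ⟨_, heig.indicator_preimage e2piRat⟩, ⟨_, heig.indicator_preimage e2piRatᶜ⟩⟩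
end
end
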